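/- For any measurement assemblage {B_{a|x}} and any density matrix ρ, the steerable weight of {ρ^{1/2} B_{a|x} ρ^{1/2}} is at most the incompatible weight of {B_{a|x}}: SW(ρ^{1/2} B ρ^{1/2}) ≤ IW(B). -/

import Mathlib

open Matrix Kronecker BigOperators ComplexOrder

noncomputable section

/-- A density matrix: positive semidefinite with unit trace. -/
def IsDensity {d : ℕ} (ρ : Matrix (Fin d) (Fin d) ℂ) : Prop :=
  ρ.PosSemidef ∧ ρ.trace = 1

/-- A POVM: positive semidefinite effects summing to the identity. -/
def IsPOVM {d nl : ℕ} (G : Fin nl → Matrix (Fin d) (Fin d) ℂ) : Prop :=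
  (∀ l, (G l).PosSemidef) ∧ ∑ l, G l = 1

/-- A measurement assemblage: for each setting `x`, a POVM `a ↦ M x a`. -/
def IsMA {d na nx : ℕ} (M : Fin nx → Fin na → Matrix (Fin d) (Fin d) ℂ) : Prop :=
  (∀ x a, (M x a).PosSemidef) ∧ ∀ x, ∑ a, M x a = 1

/-- Joint measurability: `M x a = ∑ λ p(a|x,λ) G λ` for a parent POVM `G`. -/
def JM {d na nx : ℕ} (M : Fin nx → Fin na → Matrix (Fin d) (Fin d) ℂ) : Prop :=
  ∃ (nl : ℕ) (G : Fin nl → Matrix (Fin d) (Fin d) ℂ)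
    (p : Fin nx → Fin na → Fin nl → ℝ),
    IsPOVM G ∧ (∀ x a l, 0 ≤ p x a l) ∧ (∀ x l, ∑ a, p x a l = 1) ∧
    ∀ x a, M x a = ∑ l, (p x a l : ℂ) • G l

/-- A state assemblage: PSD elements with an `x`-independent reduced density matrix. -/
def IsSA {d na nx : ℕ} (σ : Fin nx → Fin na → Matrix (Fin d) (Fin d) ℂ) : Prop :=
  (∀ x a, (σ x a).PosSemidef) ∧
  ∃ ρ : Matrix (Fin d) (Fin d) ℂ, IsDensity ρ ∧ ∀ x, ∑ a, σ x a = ρ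

/-- Local-hidden-state model: `σ x a = ∑ λ q(λ) p(a|x,λ) ρ_λ`. -/
def LHS {d na nx : ℕ} (σ : Fin nx → Fin na → Matrix (Fin d) (Fin d) ℂ) : Prop :=
  ∃ (nl : ℕ) (q : Fin nl → ℝ) (p : Fin nx → Fin na → Fin nl → ℝ)
    (ρ : Fin nl → Matrix (Fin d) (Fin d) ℂ),
    (∀ l, 0 ≤ q l) ∧ (∑ l, q l = 1) ∧
    (∀ x a l, 0 ≤ p x a l) ∧ (∀ x l, ∑ a, p x a l = 1) ∧
    (∀ l, IsDensity (ρ l)) ∧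
    ∀ x a, σ x a = ∑ l, ((q l * p x a l : ℝ) : ℂ) • ρ l

/-- Incompatibility robustness. -/
def IR {d na nx : ℕ} (B : Fin nx → Fin na → Matrix (Fin d) (Fin d) ℂ) : ℝ :=
  sInf {t : ℝ | 0 ≤ t ∧ ∃ N, IsMA N ∧
    JM (fun x a => (((1 + t : ℝ))⁻¹ : ℂ) • (B x a + (t : ℂ) • N x a))}

/-- Steering robustness. -/
def SR {d na nx : ℕ} (σ : Fin nx → Fin na → Matrix (Fin d) (Fin d) ℂ) : ℝ :=
  sInf {t : ℝ | 0 ≤ t ∧ ∃ ξ, IsSA ξ ∧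
    LHS (fun x a => (((1 + t : ℝ))⁻¹ : ℂ) • (σ x a + (t : ℂ) • ξ x a))}

/-- Incompatible weight. -/
def IW {d na nx : ℕ} (B : Fin nx → Fin na → Matrix (Fin d) (Fin d) ℂ) : ℝ :=
  sInf {t : ℝ | 0 ≤ t ∧ t ≤ 1 ∧ ∃ N O, IsMA N ∧ JM O ∧
    ∀ x a, B x a = (t : ℂ) • N x a + ((1 - t : ℝ) : ℂ) • O x a}

/-- Steerable weight. -/
def SW {d na nx : ℕ} (σ : Fin nx → Fin na → Matrix (Fin d) (Fin d) ℂ) : ℝ :=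
  sInf {t : ℝ | 0 ≤ t ∧ t ≤ 1 ∧ ∃ ξ τ, IsSA ξ ∧ LHS τ ∧
    ∀ x a, σ x a = (t : ℂ) • ξ x a + ((1 - t : ℝ) : ℂ) • τ x a}

/-- Positive map on matrices. -/
def PosMap {d : ℕ} (E : Matrix (Fin d) (Fin d) ℂ →ₗ[ℂ] Matrix (Fin d) (Fin d) ℂ) : Prop :=
  ∀ X, X.PosSemidef → (E X).PosSemidef

/-- Trace-nonincreasing on PSD matrices. -/
def TNI {d : ℕ} (E : Matrix (Fin d) (Fin d) ℂ →ₗ[ℂ] Matrix (Fin d) (Fin d) ℂ) : Prop :=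
  ∀ X : Matrix (Fin d) (Fin d) ℂ, X.PosSemidef → (E X).trace.re ≤ X.trace.re

/-- `Ed` is the Hilbert–Schmidt adjoint of `E`. -/
def IsAdjoint {d : ℕ} (E Ed : Matrix (Fin d) (Fin d) ℂ →ₗ[ℂ] Matrix (Fin d) (Fin d) ℂ) : Prop :=
  ∀ X Y, ((E X)ᴴ * Y).trace = (Xᴴ * (Ed Y)).trace

/-- Partial trace over the first tensor factor. -/
def ptraceA {d d' : ℕ} (M : Matrix (Fin d × Fin d') (Fin d × Fin d') ℂ) :
    Matrix (Fin d') (Fin d') ℂ :=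
  Matrix.of fun i j => ∑ k : Fin d, M (k, i) (k, j)

/-- The map `E ⊗ id` acting on bipartite matrices. -/
def tensId {d d' : ℕ} (E : Matrix (Fin d) (Fin d) ℂ →ₗ[ℂ] Matrix (Fin d) (Fin d) ℂ)
    (M : Matrix (Fin d × Fin d') (Fin d × Fin d') ℂ) :
    Matrix (Fin d × Fin d') (Fin d × Fin d') ℂ :=
  Matrix.of fun p q => E (Matrix.of fun i k => M (i, p.2) (k, q.2)) p.1 q.1

/-- The square root of a PSD matrix, as `Matrix.PosSemidef.sqrt` was defined in Mathlib
(Dec 2024); removed from current Mathlib. -/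
def Matrix.PosSemidef.sqrt {n : Type*} [Fintype n] [DecidableEq n] {A : Matrix n n ℂ}
    (hA : A.PosSemidef) : Matrix n n ℂ :=
  (hA.1.eigenvectorUnitary : Matrix n n ℂ) *
    diagonal (fun i => ((Real.sqrt (hA.1.eigenvalues i) : ℝ) : ℂ)) *
    (star hA.1.eigenvectorUnitary : Matrix n n ℂ)

/-! Conjugating by `ρ^{1/2}` sends a measurement assemblage `N` to a state assemblage with
reduced state `ρ`, and a jointly measurable `O = ∑ λ p(·|·,λ) G λ` to the LHS model with
weights `q λ = tr (ρ G λ)` and hidden states `ρ^{1/2} G λ ρ^{1/2} / q λ`. Hence every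
decomposition witnessing `IW B ≤ t` becomes, after conjugation, one witnessing
`SW (ρ^{1/2} B ρ^{1/2}) ≤ t`. Since `sInf ∅ = 0`, one also needs that some `t` is admissible
for `IW B`: `t = 1` is, with the depolarised `O x a = (tr B_{a|x} / d) • 1`. -/

namespace Matrix.PosSemidef

variable {n : Type*} [Fintype n] [DecidableEq n]

lemma posSemidef_sqrt {A : Matrix n n ℂ} (hA : A.PosSemidef) : hA.sqrt.PosSemidef := by
  refine (PosSemidef.diagonal fun i => ?_).mul_mul_conjTranspose_same
    (hA.1.eigenvectorUnitary : Matrix n n ℂ)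
  exact Complex.zero_le_real.mpr (Real.sqrt_nonneg _)

lemma sqrt_mul_self {A : Matrix n n ℂ} (hA : A.PosSemidef) : hA.sqrt * hA.sqrt = A := by
  set U : Matrix n n ℂ := (hA.1.eigenvectorUnitary : Matrix n n ℂ)
  set D := diagonal fun i => ((Real.sqrt (hA.1.eigenvalues i) : ℝ) : ℂ)
  have hUU : star U * U = 1 := Unitary.coe_star_mul_self _
  have hDD : D * D = diagonal (RCLike.ofReal ∘ hA.1.eigenvalues) := by
    rw [diagonal_mul_diagonal]
    congr 1
    funext i
    rw [← Complex.ofReal_mul, Real.mul_self_sqrt (hA.eigenvalues_nonneg i)]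
    rfl
  calc hA.sqrt * hA.sqrt = U * (D * (star U * U) * D) * star U := by
        simp only [sqrt, Matrix.mul_assoc]; rfl
    _ = A := by
        rw [hUU, Matrix.mul_one, hDD]
        conv_rhs => rw [hA.1.spectral_theorem, Unitary.conjStarAlgAut_apply]

end Matrix.PosSemidef

variable {d na nx : ℕ}

lemma ne_zero_of_trace_eq_one {ρ : Matrix (Fin d) (Fin d) ℂ} (h : ρ.trace = 1) : d ≠ 0 := by
  rintro rfl
  simp [Matrix.trace] at h

lemma Matrix.PosSemidef.re_trace_nonneg {K : Matrix (Fin d) (Fin d) ℂ} (hK : K.PosSemidef) :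
    0 ≤ K.trace.re :=
  (Complex.nonneg_iff.mp hK.trace_nonneg).1

lemma Matrix.PosSemidef.exists_isDensity_eq_smul {K : Matrix (Fin d) (Fin d) ℂ}
    (hK : K.PosSemidef) (hd : d ≠ 0) :
    ∃ σ, IsDensity σ ∧ K = ((K.trace.re : ℝ) : ℂ) • σ := by
  have htr : K.trace = (K.trace.re : ℂ) := Complex.eq_re_of_ofReal_le hK.trace_nonneg
  by_cases h0 : K.trace.re = 0
  · -- a PSD matrix of trace zero vanishes, so any density matrix will do
    refine ⟨((d : ℂ)⁻¹) • 1, ⟨PosSemidef.one.smul (by positivity), ?_⟩, ?_⟩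
    · simp [Matrix.trace_smul, hd]
    · rw [hK.trace_eq_zero_iff.mp (by rw [htr, h0, Complex.ofReal_zero])]
      simp
  · refine ⟨((K.trace.re⁻¹ : ℝ) : ℂ) • K,
      ⟨hK.smul (Complex.zero_le_real.mpr (inv_nonneg.mpr hK.re_trace_nonneg)), ?_⟩, ?_⟩
    · rw [Matrix.trace_smul, smul_eq_mul]
      nth_rw 2 [htr]
      rw [← Complex.ofReal_mul, inv_mul_cancel₀ h0, Complex.ofReal_one]
    · rw [smul_smul, ← Complex.ofReal_mul, mul_inv_cancel₀ h0, Complex.ofReal_one, one_smul]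

lemma IsMA.jm_trace_smul_one {B : Fin nx → Fin na → Matrix (Fin d) (Fin d) ℂ} (hB : IsMA B)
    (hd : d ≠ 0) :
    JM fun x a => (((B x a).trace.re / d : ℝ) : ℂ) • (1 : Matrix (Fin d) (Fin d) ℂ) := by
  refine ⟨1, fun _ => 1, fun x a _ => (B x a).trace.re / d,
    ⟨fun _ => PosSemidef.one, by simp⟩, fun x a _ => ?_, fun x _ => ?_, fun x a => by simp⟩
  · exact div_nonneg (hB.1 x a).re_trace_nonneg d.cast_nonneg
  · rw [← Finset.sum_div, ← Complex.re_sum, ← Matrix.trace_sum, hB.2 x, Matrix.trace_one]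
    simp [hd]

variable (S : Matrix (Fin d) (Fin d) ℂ)

lemma IsMA.isSA_conjTranspose_mul_mul {N : Fin nx → Fin na → Matrix (Fin d) (Fin d) ℂ}
    (hN : IsMA N) (hS : (Sᴴ * S).trace = 1) : IsSA fun x a => Sᴴ * N x a * S := by
  refine ⟨fun x a => (hN.1 x a).conjTranspose_mul_mul_same S,
    Sᴴ * S, ⟨posSemidef_conjTranspose_mul_self S, hS⟩, fun x => ?_⟩
  rw [← Finset.sum_mul, ← Finset.mul_sum, hN.2 x, Matrix.mul_one]

lemma JM.lhs_conjTranspose_mul_mul {O : Fin nx → Fin na → Matrix (Fin d) (Fin d) ℂ}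
    (hO : JM O) (hS : (Sᴴ * S).trace = 1) : LHS fun x a => Sᴴ * O x a * S := by
  obtain ⟨nl, G, p, ⟨hG, hG1⟩, hp0, hp1, hO⟩ := hO
  have hK (l : Fin nl) : (Sᴴ * G l * S).PosSemidef := (hG l).conjTranspose_mul_mul_same S
  choose σ hσ hKσ using fun l => (hK l).exists_isDensity_eq_smul (ne_zero_of_trace_eq_one hS)
  set q := fun l => (Sᴴ * G l * S).trace.re
  have hq : ∑ l, q l = 1 := by
    rw [← Complex.re_sum, ← Matrix.trace_sum, ← Finset.sum_mul, ← Finset.mul_sum, hG1,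
      Matrix.mul_one, hS, Complex.one_re]
  refine ⟨nl, q, p, σ, fun l => (hK l).re_trace_nonneg, hq, hp0, hp1,
    hσ, fun x a => ?_⟩
  simp only [hO, Finset.mul_sum, Finset.sum_mul, Matrix.mul_smul, Matrix.smul_mul]
  refine Finset.sum_congr rfl fun l _ => ?_
  rw [hKσ l, smul_smul, ← Complex.ofReal_mul, mul_comm]

/-- SW(ρ^{1/2} B ρ^{1/2}) ≤ IW(B). -/
theorem sw_conj_le_iw {d na nx : ℕ}
    (B : Fin nx → Fin na → Matrix (Fin d) (Fin d) ℂ) (hB : IsMA B)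
    (ρ : Matrix (Fin d) (Fin d) ℂ) (hρ : ρ.PosSemidef) (hρ1 : ρ.trace = 1) :
    SW (fun x a => hρ.sqrt * B x a * hρ.sqrt) ≤ IW B := by
  set s := hρ.sqrt
  have hs : sᴴ = s := hρ.posSemidef_sqrt.isHermitian.eq
  have hss : (sᴴ * s).trace = 1 := by rw [hs, hρ.sqrt_mul_self, hρ1]
  have hIW_one : 1 ∈ {t : ℝ | 0 ≤ t ∧ t ≤ 1 ∧ ∃ N O, IsMA N ∧ JM O ∧
      ∀ x a, B x a = (t : ℂ) • N x a + ((1 - t : ℝ) : ℂ) • O x a} :=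
    ⟨zero_le_one, le_rfl, B, _, hB, hB.jm_trace_smul_one (ne_zero_of_trace_eq_one hρ1),
      fun x a => by simp⟩
  refine csInf_le_csInf ⟨0, fun t ht => ht.1⟩ ⟨1, hIW_one⟩ ?_
  rintro t ⟨ht0, ht1, N, O, hN, hO, hBNO⟩
  refine ⟨ht0, ht1, _, _, hN.isSA_conjTranspose_mul_mul s hss, hO.lhs_conjTranspose_mul_mul s hss,
    fun x a => ?_⟩
  simp only [hs, hBNO x a, Matrix.mul_add, Matrix.add_mul, Matrix.mul_smul, Matrix.smul_mul]
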